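/- arXiv:2003.13305 — 3 statements merged into one kernel-verified Lean document; each statement's English description precedes it below -/
import Mathlib

section
/- Edwards–Sokal marginal over spin configurations: let G be a finite simple graph with vertex set V and edge set E and let p ∈ [0, 1]. Then for every FK configuration ω ⊆ E, Σ_{σ : V → {−1,1}} μ(σ, ω) = p^{|ω|} · (1 − p)^{|E| − |ω|} · 2^{k(ω)}, where k(ω) is the number of connected components of the spanning subgraph (V, ω). In particular the ω-marginal of the normalized Edwards–Sokal measure is the FK (random-cluster) measure with cluster weight q = 2. -/
/-!
An open edge whose endpoints carry different spins has weight `0`, so only spin configurations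
that are constant along open edges contribute, each with weight `p^{|ω|} (1 - p)^{|E| - |ω|}`.
Those configurations are the functions on the clusters of `ω`, and there are `2^{k(ω)}` of them.
-/

open Finset

/-- The product of the spins at the two endpoints of an unordered pair of vertices. -/
def spinProd {V : Type*} (σ : V → ℝ) : Sym2 V → ℝ :=
  Sym2.lift ⟨fun x y => σ x * σ y, fun _ _ => mul_comm _ _⟩

/-- The Edwards–Sokal weight `μ(σ, ω)` with parameter `p`, edge set `E` and open edge set
`ω`: an edge `e ∉ ω` contributes `1 − p`; an edge `e ∈ ω` contributes `p` if its endpoint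
spins agree and `0` otherwise. -/
noncomputable def esWeight {V : Type*} [DecidableEq V] (p : ℝ)
    (E ω : Finset (Sym2 V)) (σ : V → ℝ) : ℝ :=
  ∏ e ∈ E, if e ∈ ω then (if spinProd σ e = 1 then p else 0) else (1 - p)

namespace SimpleGraph

variable {V β : Type*} {H : SimpleGraph V}

theorem Reachable.apply_eq_of_forall_adj {f : V → β} (hf : ∀ v w, H.Adj v w → f v = f w)
    {u v : V} (h : H.Reachable u v) : f u = f v := by
  obtain ⟨p⟩ := h
  induction p with
  | nil => rfl
  | cons hadj _ ih => exact (hf _ _ hadj).trans ih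

variable (H β) in
def adjInvariantEquiv :
    {f : V → β // ∀ v w, H.Adj v w → f v = f w} ≃ (H.ConnectedComponent → β) where
  toFun f := ConnectedComponent.lift f.1 fun _ _ p _ => Reachable.apply_eq_of_forall_adj f.2 ⟨p⟩
  invFun g := ⟨fun v => g (H.connectedComponentMk v), fun _ _ hadj =>
    congrArg g (ConnectedComponent.connectedComponentMk_eq_of_adj hadj)⟩
  left_inv _ := rfl
  right_inv _ := funext fun c => c.ind fun _ => rfl

theorem natCard_adjInvariant [Finite V] :
    Nat.card {f : V → β // ∀ v w, H.Adj v w → f v = f w} =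
      Nat.card β ^ Nat.card H.ConnectedComponent := by
  rw [Nat.card_congr (H.adjInvariantEquiv β), Nat.card_fun]

end SimpleGraph

theorem esWeight_of_subset {V : Type*} [DecidableEq V] (p : ℝ) {E ω : Finset (Sym2 V)}
    (hω : ω ⊆ E) (σ : V → ℝ) :
    esWeight p E ω σ =
      (if ∀ e ∈ ω, spinProd σ e = 1 then p ^ ω.card else 0) * (1 - p) ^ (E.card - ω.card) := by
  have hopen : E.filter (· ∈ ω) = ω := by rw [filter_mem_eq_inter, inter_eq_right.mpr hω]
  rw [esWeight, prod_ite, hopen, prod_ite_zero, prod_const, prod_const, filter_not, hopen,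
    card_sdiff_of_subset hω]

theorem spinProd_mk_eq_one_iff {V : Type*} (s : V → Bool) (x y : V) :
    spinProd (fun v => if s v then (1 : ℝ) else -1) s(x, y) = 1 ↔ s x = s y := by
  simp only [spinProd, Sym2.lift_mk]
  cases s x <;> cases s y <;> norm_num

theorem forall_spinProd_eq_one_iff {V : Type*} (ω : Finset (Sym2 V)) (s : V → Bool) :
    (∀ e ∈ ω, spinProd (fun v => if s v then (1 : ℝ) else -1) e = 1) ↔
      ∀ v w, (SimpleGraph.fromEdgeSet (↑ω : Set (Sym2 V))).Adj v w → s v = s w := by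
  simp only [SimpleGraph.fromEdgeSet_adj, mem_coe]
  refine ⟨fun h v w hvw => (spinProd_mk_eq_one_iff s v w).mp (h _ hvw.1), fun h e he => ?_⟩
  induction e with
  | h x y =>
    rw [spinProd_mk_eq_one_iff]
    by_cases hxy : x = y
    -- `fromEdgeSet` drops loops, whose spin product is `1` anyway.
    · rw [hxy]
    · exact h x y ⟨he, hxy⟩

theorem edwards_sokal_fk_marginal_general {V : Type*} [Fintype V] [DecidableEq V]
    (G : SimpleGraph V) [DecidableRel G.Adj] (p : ℝ)
    (ω : Finset (Sym2 V)) (hω : ω ⊆ G.edgeFinset) :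
    ∑ s : V → Bool,
        esWeight p G.edgeFinset ω (fun v => if s v then (1 : ℝ) else -1) =
      p ^ ω.card * (1 - p) ^ (G.edgeFinset.card - ω.card) *
        2 ^ Nat.card (SimpleGraph.fromEdgeSet (↑ω : Set (Sym2 V))).ConnectedComponent := by
  simp_rw [esWeight_of_subset p hω, forall_spinProd_eq_one_iff]
  rw [← sum_mul, sum_ite, sum_const_zero, add_zero, sum_const, nsmul_eq_mul,
    ← Fintype.card_subtype, Fintype.card_eq_nat_card, SimpleGraph.natCard_adjInvariant,
    Nat.card_eq_fintype_card (α := Bool), Fintype.card_bool]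
  push_cast
  ring

/-- Edwards–Sokal marginal over spin configurations: for `p ∈ [0, 1]` and every FK
configuration `ω ⊆ E`,
`∑_{σ : V → {±1}} μ(σ, ω) = p^{|ω|} (1 − p)^{|E| − |ω|} 2^{k(ω)}`, where `k(ω)` is the
number of connected components of the spanning subgraph `(V, ω)`. Spin configurations are
encoded by `s : V → Bool` via `σ v = 1` if `s v` and `σ v = −1` otherwise. -/
theorem edwards_sokal_fk_marginal {V : Type*} [Fintype V] [DecidableEq V]
    (G : SimpleGraph V) [DecidableRel G.Adj] (p : ℝ) (hp0 : 0 ≤ p) (hp1 : p ≤ 1)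
    (ω : Finset (Sym2 V)) (hω : ω ⊆ G.edgeFinset) :
    ∑ s : V → Bool,
        esWeight p G.edgeFinset ω (fun v => if s v then (1 : ℝ) else -1) =
      p ^ ω.card * (1 - p) ^ (G.edgeFinset.card - ω.card) *
        2 ^ Nat.card (SimpleGraph.fromEdgeSet (↑ω : Set (Sym2 V))).ConnectedComponent :=
  edwards_sokal_fk_marginal_general G p ω hω
end

section
/- Ising spin correlations equal FK connection probabilities: let G be a finite simple graph with vertex set V and edge set E, let β ≥ 0 and p = 1 − e^{−2β}, and let x, y ∈ V. Then ( Σ_{σ : V → {−1,1}} σ_x σ_y e^{β H(σ)} ) / ( Σ_{σ} e^{β H(σ)} ) = ( Σ_{ω ⊆ E, x ↔ y in ω} p^{|ω|} (1 − p)^{|E| − |ω|} 2^{k(ω)} ) / ( Σ_{ω ⊆ E} p^{|ω|} (1 − p)^{|E| − |ω|} 2^{k(ω)} ), where x ↔ y in ω means x and y lie in the same connected component of the spanning subgraph (V, ω); both denominators are strictly positive. -/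
/-!
Edwards–Sokal expansion. With `p = 1 - e^{-2β}`, each edge contributes
`e^{β σ_a σ_b} = e^β ((1 - p) + p · 1[σ_a = σ_b])`, so expanding the product over the edges,
`e^{β H(σ)} = e^{β |E|} ∑_{ω ⊆ E} p^{|ω|} (1 - p)^{|E| - |ω|} 1[σ constant on the clusters of ω]`.
Summing over `σ` first, the spin configurations constant on the clusters of `ω` are the
functions on its `k(ω)` clusters. There are `2^{k(ω)}` of them, and `σ_x σ_y` sums over them to
`2^{k(ω)}` when `x ↔ y` in `ω` and to `0` otherwise, since the spin of the cluster of `x` then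
sums to zero on its own. Numerator and denominator both pick up the factor `e^{β |E|}`.
-/

open Finset
open scoped Classical

open SimpleGraph

def spinOfBool (b : Bool) : ℝ := if b then 1 else -1

lemma sum_spinOfBool_mul_spinOfBool {C : Type*} [Fintype C] [DecidableEq C] (a b : C) :
    ∑ t : C → Bool, spinOfBool (t a) * spinOfBool (t b) =
      if a = b then 2 ^ Fintype.card C else 0 := by
  split_ifs with hab
  · subst hab
    have hsq (t : C → Bool) : spinOfBool (t a) * spinOfBool (t a) = 1 := by
      cases t a <;> norm_num [spinOfBool]
    simp [hsq]
  · let b' : {c // c ≠ a} := ⟨b, Ne.symm hab⟩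
    calc ∑ t : C → Bool, spinOfBool (t a) * spinOfBool (t b)
        = ∑ q : Bool × ({c // c ≠ a} → Bool), spinOfBool q.1 * spinOfBool (q.2 b') :=
          (Equiv.funSplitAt a Bool).sum_comp fun q => spinOfBool q.1 * spinOfBool (q.2 b')
      _ = (∑ c, spinOfBool c) * ∑ r : {c // c ≠ a} → Bool, spinOfBool (r b') := by
          rw [Fintype.sum_prod_type, Fintype.sum_mul_sum]
      _ = 0 := by simp [spinOfBool]

section

variable {V : Type*}

lemma spinProd_spinOfBool_comp (s : V → Bool) (e : Sym2 V) :
    spinProd (spinOfBool ∘ s) e = if (e.map s).IsDiag then 1 else -1 := by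
  induction e using Sym2.ind with
  | h a b =>
    simp only [spinProd, Sym2.lift_mk, Function.comp_apply, Sym2.map_mk, Sym2.mk_isDiag_iff,
      spinOfBool]
    cases s a <;> cases s b <;> norm_num

lemma exp_mul_spinProd_spinOfBool_comp {β p : ℝ} (hp : p = 1 - Real.exp (-2 * β))
    (s : V → Bool) (e : Sym2 V) :
    Real.exp (β * spinProd (spinOfBool ∘ s) e) =
      Real.exp β * (p * (if (e.map s).IsDiag then 1 else 0) + (1 - p)) := by
  rw [spinProd_spinOfBool_comp]
  split_ifs
  · ring_nf
  · rw [hp, sub_sub_cancel, mul_zero, zero_add, ← Real.exp_add]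
    ring_nf

lemma exp_mul_sum_spinProd_eq_sum_powerset {β p : ℝ} (hp : p = 1 - Real.exp (-2 * β))
    (E : Finset (Sym2 V)) (s : V → Bool) :
    Real.exp (β * ∑ e ∈ E, spinProd (spinOfBool ∘ s) e) =
      Real.exp β ^ #E * ∑ ω ∈ E.powerset,
        p ^ #ω * (1 - p) ^ (#E - #ω) * if ∀ e ∈ ω, (e.map s).IsDiag then 1 else 0 := by
  rw [Finset.mul_sum, Real.exp_sum, Finset.prod_congr rfl fun e _ =>
    exp_mul_spinProd_spinOfBool_comp hp s e, Finset.prod_mul_distrib, Finset.prod_const,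
    Finset.prod_add]
  congr 1
  refine Finset.sum_congr rfl fun ω hω => ?_
  rw [Finset.prod_mul_distrib, Finset.prod_const, Finset.prod_boole, Finset.prod_const,
    Finset.card_sdiff_of_subset (Finset.mem_powerset.mp hω)]
  ring

lemma forall_isDiag_map_iff_reachable_imp_eq {α : Type*} (s : V → α) (ω : Set (Sym2 V)) :
    (∀ e ∈ ω, (e.map s).IsDiag) ↔ ∀ u v, (fromEdgeSet ω).Reachable u v → s u = s v := by
  constructor
  · rintro h u v ⟨w⟩
    induction w with
    | nil => rfl
    | cons hadj _ ih =>
      have hdiag := h _ ((fromEdgeSet_adj ω).mp hadj).1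
      rw [Sym2.map_mk, Sym2.mk_isDiag_iff] at hdiag
      exact hdiag.trans ih
  · intro h e he
    induction e using Sym2.ind with
    | h a b =>
      rw [Sym2.map_mk, Sym2.mk_isDiag_iff]
      by_cases hab : a = b
      · rw [hab]
      · exact h a b (Adj.reachable ((fromEdgeSet_adj ω).mpr ⟨he, hab⟩))

lemma sum_ite_forall_reachable_imp_eq {α M : Type*} [Fintype V] [DecidableEq V] [Fintype α]
    [AddCommMonoid M] (H : SimpleGraph V) [Fintype H.ConnectedComponent] (F : (V → α) → M) :
    (∑ s : V → α, if ∀ u v, H.Reachable u v → s u = s v then F s else 0) =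
      ∑ t : H.ConnectedComponent → α, F (t ∘ H.connectedComponentMk) := by
  rw [← Finset.sum_filter]
  symm
  refine Finset.sum_nbij' (· ∘ H.connectedComponentMk) (fun s c => s c.out) ?_ ?_ ?_ ?_ ?_
  · intro t _
    simp only [Finset.mem_filter, Finset.mem_univ, true_and, Function.comp_apply]
    exact fun u v huv => congrArg t (ConnectedComponent.sound huv)
  · intro _ _
    exact Finset.mem_univ _
  · intro t _
    funext c
    exact congrArg t c.out_eq
  · intro s hs
    funext v
    exact (Finset.mem_filter.mp hs).2 _ _
      (ConnectedComponent.exact (connectedComponentMk H v).out_eq)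
  · intro _ _
    rfl

lemma sum_mul_exp_mul_sum_spinProd_eq_sum_powerset [Fintype V] [DecidableEq V] {β p : ℝ}
    (hp : p = 1 - Real.exp (-2 * β)) (E : Finset (Sym2 V)) (g : (V → Bool) → ℝ) :
    ∑ s : V → Bool, g s * Real.exp (β * ∑ e ∈ E, spinProd (spinOfBool ∘ s) e) =
      Real.exp β ^ #E * ∑ ω ∈ E.powerset, p ^ #ω * (1 - p) ^ (#E - #ω) *
        ∑ t : (fromEdgeSet (ω : Set (Sym2 V))).ConnectedComponent → Bool,
          g (t ∘ (fromEdgeSet (ω : Set (Sym2 V))).connectedComponentMk) := by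
  calc _ = ∑ s : V → Bool, Real.exp β ^ #E * ∑ ω ∈ E.powerset,
          p ^ #ω * (1 - p) ^ (#E - #ω) *
            if ∀ u v, (fromEdgeSet (ω : Set (Sym2 V))).Reachable u v → s u = s v
            then g s else 0 := by
        refine Finset.sum_congr rfl fun s _ => ?_
        rw [exp_mul_sum_spinProd_eq_sum_powerset hp, mul_left_comm, Finset.mul_sum]
        congr 1
        refine Finset.sum_congr rfl fun ω _ => ?_
        simp only [← Finset.mem_coe, forall_isDiag_map_iff_reachable_imp_eq]
        split_ifs <;> ring
    _ = Real.exp β ^ #E * ∑ ω ∈ E.powerset, p ^ #ω * (1 - p) ^ (#E - #ω) *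
          ∑ s : V → Bool,
            if ∀ u v, (fromEdgeSet (ω : Set (Sym2 V))).Reachable u v → s u = s v
            then g s else 0 := by
        rw [← Finset.mul_sum, Finset.sum_comm]
        congr 1
        exact Finset.sum_congr rfl fun ω _ => (Finset.mul_sum _ _ _).symm
    _ = _ := by
        congr 1
        refine Finset.sum_congr rfl fun ω _ => ?_
        congr 1
        -- the two sides decide reachability in `fromEdgeSet ω` through different instances
        convert sum_ite_forall_reachable_imp_eq (fromEdgeSet (ω : Set (Sym2 V))) g

end

/-- Ising spin correlations equal FK connection probabilities: for `β ≥ 0`,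
`p = 1 − e^{−2β}` and vertices `x, y`,
`⟨σ_x σ_y⟩ = P_ρ[x ↔ y]`, i.e.
`(∑_σ σ_x σ_y e^{β H(σ)}) / (∑_σ e^{β H(σ)})` equals
`(∑_{ω ⊆ E, x ↔ y in ω} p^{|ω|}(1−p)^{|E|−|ω|} 2^{k(ω)}) / (∑_{ω ⊆ E} p^{|ω|}(1−p)^{|E|−|ω|} 2^{k(ω)})`,
and both denominators are strictly positive. Spin configurations are encoded by
`s : V → Bool` via `σ v = 1` if `s v` and `σ v = −1` otherwise. -/
theorem ising_correlation_eq_fk_connection {V : Type*} [Fintype V] [DecidableEq V]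
    (G : SimpleGraph V) [DecidableRel G.Adj] (β : ℝ) (hβ : 0 ≤ β)
    (p : ℝ) (hp : p = 1 - Real.exp (-2 * β)) (x y : V) :
    let spin : (V → Bool) → V → ℝ := fun s v => if s v then 1 else -1
    let H : (V → Bool) → ℝ := fun s => ∑ e ∈ G.edgeFinset, spinProd (spin s) e
    let fkWeight : Finset (Sym2 V) → ℝ := fun ω =>
      p ^ ω.card * (1 - p) ^ (G.edgeFinset.card - ω.card) *
        2 ^ Nat.card (SimpleGraph.fromEdgeSet (↑ω : Set (Sym2 V))).ConnectedComponent
    0 < (∑ s : V → Bool, Real.exp (β * H s)) ∧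
    0 < (∑ ω ∈ G.edgeFinset.powerset, fkWeight ω) ∧
    (∑ s : V → Bool, spin s x * spin s y * Real.exp (β * H s)) /
        (∑ s : V → Bool, Real.exp (β * H s)) =
      (∑ ω ∈ G.edgeFinset.powerset,
          if (SimpleGraph.fromEdgeSet (↑ω : Set (Sym2 V))).Reachable x y
          then fkWeight ω else 0) /
        (∑ ω ∈ G.edgeFinset.powerset, fkWeight ω) := by
  intro spin H fkWeight
  have hp_nonneg : 0 ≤ p := by
    rw [hp, sub_nonneg]
    exact Real.exp_le_one_iff.mpr (by linarith)
  have hq_pos : 0 < 1 - p := by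
    rw [hp, sub_sub_cancel]
    exact Real.exp_pos _
  have hfk_pos : 0 < ∑ ω ∈ G.edgeFinset.powerset, fkWeight ω :=
    Finset.sum_pos' (fun ω _ => by positivity)
      ⟨∅, Finset.empty_mem_powerset _, by
        simp only [fkWeight, card_empty, pow_zero, one_mul]
        positivity⟩
  have hden : ∑ s, Real.exp (β * H s) =
      Real.exp β ^ #G.edgeFinset * ∑ ω ∈ G.edgeFinset.powerset, fkWeight ω := by
    have h := sum_mul_exp_mul_sum_spinProd_eq_sum_powerset hp G.edgeFinset fun _ => 1
    simp only [one_mul] at h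
    refine h.trans ?_
    simp [fkWeight, Nat.card_eq_fintype_card]
  have hnum : ∑ s, spin s x * spin s y * Real.exp (β * H s) =
      Real.exp β ^ #G.edgeFinset * ∑ ω ∈ G.edgeFinset.powerset,
        if (fromEdgeSet (ω : Set (Sym2 V))).Reachable x y then fkWeight ω else 0 := by
    refine (sum_mul_exp_mul_sum_spinProd_eq_sum_powerset hp G.edgeFinset
      fun s => spinOfBool (s x) * spinOfBool (s y)).trans ?_
    congr 1
    refine Finset.sum_congr rfl fun ω _ => ?_
    simp only [Function.comp_apply]
    rw [sum_spinOfBool_mul_spinOfBool, ConnectedComponent.eq]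
    split_ifs <;> simp [fkWeight, Nat.card_eq_fintype_card]
  refine ⟨Finset.sum_pos (fun _ _ => Real.exp_pos _) Finset.univ_nonempty, hfk_pos, ?_⟩
  rw [hnum, hden, mul_div_mul_left _ _ (by positivity)]
end

section
/- Edwards–Sokal coupling with a disorder set, marginal over edge configurations: let G be a finite simple graph with vertex set V and edge set E, let λ ⊆ E, let β ≥ 0 and p = 1 − e^{−2β}. Then for every spin configuration σ : V → {−1, 1}, Σ_{ω ⊆ E} μ_λ(σ, ω) = e^{−β|E|} · e^{β H(σ)} · e^{−2β H_λ(σ)}, where H(σ) = Σ_{{x,y} ∈ E} σ_x σ_y and H_λ(σ) = Σ_{{x,y} ∈ λ} σ_x σ_y. In particular the σ-marginal of the normalized coupling is proportional to e^{−2β H_λ(σ)} π_β(σ), the Ising measure twisted by the disorder factor. -/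
open Finset

/-- The Edwards–Sokal weight `μ_L(σ, ω)` with disorder (edge) set `L`, parameter `p`, edge
set `E` and open edge set `ω`: an edge `e ∉ ω` contributes `1 − p`; an edge `e ∈ ω` not in
`L` contributes `p` if its endpoint spins agree and `0` otherwise, while an edge `e ∈ ω ∩ L`
contributes `p` if its endpoint spins disagree and `0` otherwise. -/
noncomputable def esWeightDisorder {V : Type*} [DecidableEq V] (p : ℝ)
    (E L ω : Finset (Sym2 V)) (σ : V → ℝ) : ℝ :=
  ∏ e ∈ E,
    if e ∈ L then
      (if e ∈ ω then (if spinProd σ e = 1 then 0 else p) else (1 - p))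
    else
      (if e ∈ ω then (if spinProd σ e = 1 then p else 0) else (1 - p))

/-!
Summing out the bond configuration factorises over edges: the weight is a product of one factor
per edge, open or closed, so `∑_ω μ_L(σ, ω) = ∏_e (w_e^open + (1 - p))`. With `1 - p = e^{-2β}`
and `s = σ_x σ_y = ±1`, an ordinary edge contributes `p·[s = 1] + e^{-2β} = e^{-β + βs}` and a
disordered one `p·[s = -1] + e^{-2β} = e^{-β - βs}`, i.e. the same with the extra factor
`e^{-2βs}`.
-/

lemma Finset.sum_powerset_prod_ite_mem {ι R : Type*} [CommSemiring R] [DecidableEq ι]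
    (s : Finset ι) (f g : ι → R) :
    ∑ t ∈ s.powerset, ∏ i ∈ s, (if i ∈ t then f i else g i) = ∏ i ∈ s, (f i + g i) := by
  rw [prod_add]
  refine sum_congr rfl fun t ht => ?_
  rw [prod_ite, filter_mem_eq_inter, inter_eq_right.mpr (mem_powerset.mp ht), filter_not,
    filter_mem_eq_inter, inter_eq_right.mpr (mem_powerset.mp ht)]

lemma spinProd_eq_one_or_neg_one {V : Type*} {σ : V → ℝ} (hσ : ∀ v, σ v = 1 ∨ σ v = -1)
    (e : Sym2 V) : spinProd σ e = 1 ∨ spinProd σ e = -1 := by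
  induction e using Sym2.ind with
  | _ x y => rcases hσ x with hx | hx <;> rcases hσ y with hy | hy <;> simp [spinProd, hx, hy]

noncomputable def esOpenWeight {V : Type*} [DecidableEq V] (p : ℝ) (L : Finset (Sym2 V))
    (σ : V → ℝ) (e : Sym2 V) : ℝ :=
  if e ∈ L then (if spinProd σ e = 1 then 0 else p) else (if spinProd σ e = 1 then p else 0)

lemma esWeightDisorder_eq_prod {V : Type*} [DecidableEq V] (p : ℝ) (E L ω : Finset (Sym2 V))
    (σ : V → ℝ) :
    esWeightDisorder p E L ω σ =
      ∏ e ∈ E, (if e ∈ ω then esOpenWeight p L σ e else 1 - p) := by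
  refine prod_congr rfl fun e _ => ?_
  unfold esOpenWeight
  split_ifs <;> rfl

lemma sum_powerset_esWeightDisorder {V : Type*} [DecidableEq V] (p : ℝ)
    (E L : Finset (Sym2 V)) (σ : V → ℝ) :
    ∑ ω ∈ E.powerset, esWeightDisorder p E L ω σ = ∏ e ∈ E, (esOpenWeight p L σ e + (1 - p)) := by
  simp only [esWeightDisorder_eq_prod, sum_powerset_prod_ite_mem]

lemma ite_add_one_sub_eq_exp {β p s : ℝ} (hp : p = 1 - Real.exp (-2 * β))
    (hs : s = 1 ∨ s = -1) :
    (if s = 1 then p else 0) + (1 - p) = Real.exp (-β + β * s) := by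
  rcases hs with rfl | rfl
  · simp
  · rw [if_neg (by norm_num), zero_add, hp, sub_sub_cancel]; congr 1; ring

lemma ite_zero_left_add_one_sub_eq_exp {β p s : ℝ} (hp : p = 1 - Real.exp (-2 * β))
    (hs : s = 1 ∨ s = -1) :
    (if s = 1 then 0 else p) + (1 - p) = Real.exp (-β + β * s - 2 * β * s) := by
  rcases hs with rfl | rfl
  · rw [if_pos rfl, zero_add, hp, sub_sub_cancel]; congr 1; ring
  · rw [if_neg (by norm_num), add_sub_cancel, eq_comm, Real.exp_eq_one_iff]; ring

lemma esOpenWeight_add_one_sub {V : Type*} [DecidableEq V] {β p : ℝ}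
    (hp : p = 1 - Real.exp (-2 * β)) (L : Finset (Sym2 V)) {σ : V → ℝ}
    (hσ : ∀ v, σ v = 1 ∨ σ v = -1) (e : Sym2 V) :
    esOpenWeight p L σ e + (1 - p) =
      Real.exp (-β + β * spinProd σ e + if e ∈ L then -2 * β * spinProd σ e else 0) := by
  have hs := spinProd_eq_one_or_neg_one hσ e
  unfold esOpenWeight
  by_cases he : e ∈ L
  · rw [if_pos he, if_pos he, ite_zero_left_add_one_sub_eq_exp hp hs]; ring_nf
  · rw [if_neg he, if_neg he, ite_add_one_sub_eq_exp hp hs, add_zero]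

theorem edwards_sokal_disorder_spin_marginal_general {V : Type*} [Fintype V] [DecidableEq V]
    (G : SimpleGraph V) [DecidableRel G.Adj]
    (L : Finset (Sym2 V)) (hL : L ⊆ G.edgeFinset)
    (β : ℝ) (p : ℝ) (hp : p = 1 - Real.exp (-2 * β))
    (σ : V → ℝ) (hσ : ∀ v, σ v = 1 ∨ σ v = -1) :
    ∑ ω ∈ G.edgeFinset.powerset, esWeightDisorder p G.edgeFinset L ω σ =
      Real.exp (-β * (G.edgeFinset.card : ℝ)) *
        Real.exp (β * ∑ e ∈ G.edgeFinset, spinProd σ e) *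
        Real.exp (-2 * β * ∑ e ∈ L, spinProd σ e) := by
  rw [sum_powerset_esWeightDisorder, prod_congr rfl fun e _ => esOpenWeight_add_one_sub hp L hσ e,
    ← Real.exp_sum, ← Real.exp_add, ← Real.exp_add, sum_add_distrib, sum_add_distrib, sum_const,
    sum_ite_mem, inter_eq_right.mpr hL, ← mul_sum, ← mul_sum, nsmul_eq_mul]
  ring_nf

/-- Edwards–Sokal coupling with a disorder set, marginal over edge configurations: for
`β ≥ 0`, `p = 1 − e^{−2β}`, `L ⊆ E` and any `±1`-valued spin configuration `σ`,
`∑_{ω ⊆ E} μ_L(σ, ω) = e^{−β|E|} · e^{β H(σ)} · e^{−2β H_L(σ)}`, where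
`H(σ) = ∑_{{x,y} ∈ E} σ_x σ_y` and `H_L(σ) = ∑_{{x,y} ∈ L} σ_x σ_y`. -/
theorem edwards_sokal_disorder_spin_marginal {V : Type*} [Fintype V] [DecidableEq V]
    (G : SimpleGraph V) [DecidableRel G.Adj]
    (L : Finset (Sym2 V)) (hL : L ⊆ G.edgeFinset)
    (β : ℝ) (hβ : 0 ≤ β) (p : ℝ) (hp : p = 1 - Real.exp (-2 * β))
    (σ : V → ℝ) (hσ : ∀ v, σ v = 1 ∨ σ v = -1) :
    ∑ ω ∈ G.edgeFinset.powerset, esWeightDisorder p G.edgeFinset L ω σ =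
      Real.exp (-β * (G.edgeFinset.card : ℝ)) *
        Real.exp (β * ∑ e ∈ G.edgeFinset, spinProd σ e) *
        Real.exp (-2 * β * ∑ e ∈ L, spinProd σ e) :=
  edwards_sokal_disorder_spin_marginal_general G L hL β p hp σ hσ
end
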